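/- Monotonicity of the maximum ratio in the budget: if budgets satisfy P̄^{S+}_t ≤ Q̄^{S+}_t for all t (with export bounds P̄^S_t fixed), then the constrained maximum local generation ratio with budgets P̄^{S+} is less than or equal to that with budgets Q̄^{S+}, i.e., X̄(P̄^{S+}) ≤ X̄(Q̄^{S+}), where X̄(b) = (Σ_t (P^G_t + b_t)) / (Σ_t (P^L_t + max{b_t − P̄^S_t, 0})), provided Σ_t(P^L_t + max{b_t − P̄^S_t,0}) > 0 and the numerator-deficit condition Σ_t P^G_t + Σ_t min{b_t, P̄^S_t} ≤ Σ_t P^L_t holds for the larger budget. -/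

import Mathlib

/-!
Split each budget `x t` into the part `min (x t) (P̄ˢ t)` that can be exported and the excess
`max (x t - P̄ˢ t) 0` that must be consumed locally. Writing `M` for generation plus exportable
part, `E` for the total excess and `L` for the total load, the ratio is `(M + E) / (L + E)`.
It grows with `M`, and it grows with `E` as long as `M ≤ L`, which is the deficit condition.
-/

open Finset

lemma min_add_max_sub_zero {α : Type*} [AddCommGroup α] [LinearOrder α] [IsOrderedAddMonoid α]
    (x s : α) : min x s + max (x - s) 0 = x := by
  rcases le_total x s with h | h
  · rw [min_eq_left h, max_eq_right (sub_nonpos.2 h), add_zero]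
  · rw [min_eq_right h, max_eq_left (sub_nonneg.2 h), add_sub_cancel]

/-- `(m + e) / (L + e) = 1 - (L - m) / (L + e)` increases in `e` when `m ≤ L`. -/
lemma add_div_add_le_add_div_add {m L e₁ e₂ : ℝ} (hpos : 0 < L + e₁) (he : e₁ ≤ e₂)
    (hm : m ≤ L) : (m + e₁) / (L + e₁) ≤ (m + e₂) / (L + e₂) := by
  rw [div_le_div_iff₀ hpos (by linarith)]
  nlinarith [mul_nonneg (sub_nonneg.2 he) (sub_nonneg.2 hm)]

lemma sum_add_eq_sum_min_add_sum_max {T : Type*} [Fintype T] (g x s : T → ℝ) :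
    ∑ t, (g t + x t) = (∑ t, g t + ∑ t, min (x t) (s t)) + ∑ t, max (x t - s t) 0 := by
  simp only [add_assoc, ← sum_add_distrib, min_add_max_sub_zero]

theorem stmt_15_general {T : Type*} [Fintype T]
    (PG PL PbarS b q : T → ℝ)
    (hbq : ∀ t, b t ≤ q t)
    (hdenb : 0 < ∑ t, (PL t + max (b t - PbarS t) 0))
    (hdef : ∑ t, PG t + ∑ t, min (q t) (PbarS t) ≤ ∑ t, PL t) :
    (∑ t, (PG t + b t)) / (∑ t, (PL t + max (b t - PbarS t) 0)) ≤
    (∑ t, (PG t + q t)) / (∑ t, (PL t + max (q t - PbarS t) 0)) := by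
  rw [sum_add_distrib] at hdenb
  rw [sum_add_eq_sum_min_add_sum_max PG b PbarS, sum_add_eq_sum_min_add_sum_max PG q PbarS,
    sum_add_distrib, sum_add_distrib]
  calc _ ≤ (∑ t, PG t + ∑ t, min (q t) (PbarS t) + ∑ t, max (b t - PbarS t) 0) /
        (∑ t, PL t + ∑ t, max (b t - PbarS t) 0) := by
        gcongr with t
        exact hbq t
    _ ≤ _ := add_div_add_le_add_div_add hdenb (by gcongr with t; exact hbq t) hdef

/-- Monotonicity of the constrained maximum ratio in the capacity budget:
pointwise larger budgets give a (weakly) larger maximum local generation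
ratio, under positive denominators and the numerator-deficit condition for the
larger budget. -/
theorem stmt_15 {T : Type*} [Fintype T] [Nonempty T]
    (PG PL PbarS b q : T → ℝ)
    (hPG : ∀ t, 0 ≤ PG t) (hPL : ∀ t, 0 ≤ PL t) (hPbarS : ∀ t, 0 ≤ PbarS t)
    (hb : ∀ t, 0 ≤ b t) (hq : ∀ t, 0 ≤ q t)
    (hL : 0 < ∑ t, PL t)
    (hbq : ∀ t, b t ≤ q t)
    (hdenb : 0 < ∑ t, (PL t + max (b t - PbarS t) 0))
    (hdenq : 0 < ∑ t, (PL t + max (q t - PbarS t) 0))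
    (hdef : ∑ t, PG t + ∑ t, min (q t) (PbarS t) ≤ ∑ t, PL t) :
    (∑ t, (PG t + b t)) / (∑ t, (PL t + max (b t - PbarS t) 0)) ≤
    (∑ t, (PG t + q t)) / (∑ t, (PL t + max (q t - PbarS t) 0)) :=
  stmt_15_general PG PL PbarS b q hbq hdenb hdef
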